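/- Let p be an odd prime, ω := exp(2πi/p). For all i ∈ ZMod p with i ≠ 0, all j, τ, a, b ∈ ZMod p, and all c ∈ ZMod p with c ≠ 0, one has |(1/p²) ∑_{μ ∈ ZMod p} ω^{a·μ + b·i·μ + c·((μ(μ-1)/2)·i + μ·j + τ)}|² = 1/p³. (This is the probability of observing outcome (a,b,c) when Fourier sampling the coset state of (0,0,τ)·A_{i,j} over the abelian group (ZMod p)³, showing the forgetful abelian method yields the uniform distribution on such outcomes.) -/

import Mathlib

/-- `ω^v = exp(2πi·v.val/p)` for `v : ZMod p`, where `ω = exp(2πi/p)`. -/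
noncomputable def omegaPow (p : ℕ) (v : ZMod p) : ℂ :=
  Complex.exp (2 * Real.pi * Complex.I * (v.val : ℂ) / p)

/-!
The exponent is a quadratic `A μ² + B μ + C` in `μ` with `A = c i / 2`, nonzero because `p` is
odd, and `ω^·` is the standard primitive additive character `ψ` of `ZMod p`. Expanding
`|∑ ψ (f μ)|²` and substituting `ν = μ + δ` gives `∑_δ ∑_μ ψ (f μ - f (μ + δ))`; the inner
exponent is affine in `μ` with slope `-2Aδ`, so the inner sum is `p` for `δ = 0` and `0`
otherwise. Hence the sum has squared modulus `p`, and the amplitude `p / p⁴ = 1 / p³`.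
-/

open Finset

namespace AddChar

theorem sum_mul_conj_sum_eq_sum_sum_sub {G R : Type*} [AddCommGroup G] [Fintype G]
    [AddCommGroup R] [Finite R] (ψ : AddChar R ℂ) (f : G → R) :
    (∑ x, ψ (f x)) * starRingEnd ℂ (∑ x, ψ (f x)) = ∑ δ, ∑ x, ψ (f x - f (x + δ)) := by
  rw [map_sum, sum_mul_sum, sum_comm (f := fun δ x => ψ (f x - f (x + δ)))]
  refine sum_congr rfl fun x _ => ?_
  rw [← Equiv.sum_comp (Equiv.addLeft x)]
  refine sum_congr rfl fun δ _ => ?_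
  rw [← map_neg_eq_conj, ← map_add_eq_mul, sub_eq_add_neg, Equiv.coe_addLeft]

theorem norm_sum_quadratic_sq {F : Type*} [Field F] [Fintype F] {ψ : AddChar F ℂ}
    (hψ : ψ.IsPrimitive) {A : F} (hA : 2 * A ≠ 0) (B C : F) :
    ‖∑ x, ψ (A * x ^ 2 + B * x + C)‖ ^ 2 = Fintype.card F := by
  classical
  set f : F → F := fun x => A * x ^ 2 + B * x + C
  have hdiff (x δ : F) : f x - f (x + δ) = x * -(2 * A * δ) + -(A * δ ^ 2 + B * δ) := by
    simp only [f]; ring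
  have hslope (δ : F) : -(2 * A * δ) = 0 ↔ δ = 0 := by simp [hA]
  have hinner (δ : F) : ∑ x, ψ (f x - f (x + δ)) = if δ = 0 then (Fintype.card F : ℂ) else 0 := by
    simp_rw [hdiff, map_add_eq_mul, ← sum_mul, sum_mulShift _ hψ, hslope]
    split_ifs with h <;> simp [h]
  have hsum := sum_mul_conj_sum_eq_sum_sum_sub ψ f
  rw [Complex.mul_conj, ← Complex.sq_norm, sum_congr rfl fun δ _ => hinner δ, sum_ite_eq',
    if_pos (mem_univ _)] at hsum
  exact_mod_cast hsum

end AddChar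

theorem omegaPow_eq_stdAddChar (p : ℕ) [NeZero p] (v : ZMod p) :
    omegaPow p v = ZMod.stdAddChar v := by
  conv_rhs => rw [← ZMod.natCast_zmod_val v, ← Int.cast_natCast, ZMod.stdAddChar_coe]
  rw [omegaPow]
  push_cast
  ring_nf

theorem ZMod.two_ne_zero_of_odd {p : ℕ} (hp : p.Prime) (ho : Odd p) : (2 : ZMod p) ≠ 0 := by
  rw [← Nat.cast_ofNat, Ne, ZMod.natCast_eq_zero_iff]
  intro hdvd
  have hle := Nat.le_of_dvd two_pos hdvd
  have hge := hp.two_le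
  obtain ⟨k, rfl⟩ := ho
  omega

/-- Let `p` be an odd prime and `ω = exp(2πi/p)`. For all `i ≠ 0`,
all `j, τ, a, b ∈ ZMod p` and all `c ≠ 0`,
`|(1/p²) ∑_μ ω^{aμ + biμ + c((μ(μ-1)/2)i + μj + τ)}|² = 1/p³`.
(This is the probability of observing `(a,b,c)` when Fourier sampling the coset state of
`(0,0,τ)·A_{i,j}` over the abelian group `(ZMod p)³`: the forgetful abelian method gives
the uniform distribution on such outcomes.) -/
theorem forgetful_abelian_uniform (p : ℕ) [NeZero p] (hp : p.Prime) (ho : Odd p)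
    (i : ZMod p) (hi : i ≠ 0) (j τ a b : ZMod p) (c : ZMod p) (hc : c ≠ 0) :
    ‖((p : ℂ) ^ 2)⁻¹ *
        ∑ μ : ZMod p,
          omegaPow p (a * μ + b * i * μ + c * (μ * (μ - 1) * (2 : ZMod p)⁻¹ * i + μ * j + τ))‖ ^ 2 =
      1 / (p : ℝ) ^ 3 := by
  have : Fact p.Prime := ⟨hp⟩
  set A := c * i * (2 : ZMod p)⁻¹
  have hA : 2 * A = c * i := by
    rw [mul_comm, mul_assoc, inv_mul_cancel₀ (ZMod.two_ne_zero_of_odd hp ho), mul_one]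
  have hexp (μ : ZMod p) : a * μ + b * i * μ + c * (μ * (μ - 1) * 2⁻¹ * i + μ * j + τ) =
      A * μ ^ 2 + (a + b * i + c * j - A) * μ + c * τ := by
    ring
  have hgauss := AddChar.norm_sum_quadratic_sq (ZMod.isPrimitive_stdAddChar p)
    (hA ▸ mul_ne_zero hc hi) (a + b * i + c * j - A) (c * τ)
  simp_rw [hexp, omegaPow_eq_stdAddChar, norm_mul, mul_pow, hgauss, ZMod.card, norm_inv,
    norm_pow, Complex.norm_natCast]
  have hp0 : (p : ℝ) ≠ 0 := by exact_mod_cast hp.ne_zero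
  field_simp
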